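/- arXiv:2102.04302 — 2 statements merged into one kernel-verified Lean document; each statement's English description precedes it below -/
import Mathlib

section
/- Let $p \ge 2$ be an integer and $a_1,\ldots,a_p : \mathbb T \to \mathbb R$ be continuous nonnegative functions. Define sequences $a_i^{(0)} = a_i$ and $a_i^{(k+1)} = \bigl(\prod_{j \ne i} a_j^{(k)}\bigr)^{1/(p-1)}$ for $i = 1,\ldots,p$. Then for every $k \ge 0$, $a_i^{(k)} = a_i^{n_{k-1}} \prod_{j \ne i} a_j^{n_k}$, where $n_k = \frac{1}{p}\bigl(1 + \frac{(-1)^{k+1}}{(p-1)^k}\bigr)$ (with $n_{-1} = 1$). -/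
open Finset

instance : Fact (0 < 2 * Real.pi) := ⟨by positivity⟩

/-- The closed-form ALM exponents `n_k = (1/p)(1 + (-1)^{k+1}/(p-1)^k)`. -/
noncomputable def almExp (p : ℕ) (k : ℕ) : ℝ :=
  (1 / (p : ℝ)) * (1 + (-1 : ℝ) ^ (k + 1) / ((p : ℝ) - 1) ^ k)

/-- The shifted exponent `n_{k-1}`, with `n_{-1} = 1`. -/
noncomputable def almExpPrev (p : ℕ) (k : ℕ) : ℝ :=
  if k = 0 then 1 else almExp p (k - 1)

/-!
Every iterate has the shape `a_i^b ∏_{j ≠ i} a_j^c`. Multiplying these monomials over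
`j ≠ i` gives `a_i^{(p-1)c} ∏_{j ≠ i} a_j^{b + (p-2)c}`, since each `a_m` with `m ≠ i` occurs in
`p - 2` of the inner products; taking the `(p-1)`-th root therefore maps the exponent pair `(b, c)`
to `(c, (b + (p-2)c)/(p-1))`, and the closed form `n_k` solves exactly this linear recurrence.
-/

section Monomial

variable {ι : Type*} [Fintype ι] [DecidableEq ι]

theorem Finset.prod_erase_prod_erase {M : Type*} [CommMonoid M] (g : ι → M) (i : ι) :
    ∏ j ∈ univ.erase i, ∏ l ∈ univ.erase j, g l
      = g i ^ (Fintype.card ι - 1) * ∏ l ∈ univ.erase i, g l ^ (Fintype.card ι - 2) := by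
  have hswap : ∏ j ∈ univ.erase i, ∏ l ∈ univ.erase j, g l
      = ∏ l, ∏ _j ∈ (univ.erase i).erase l, g l :=
    prod_comm' fun j l => by simp only [mem_erase, mem_univ, and_true]; tauto
  rw [hswap, ← mul_prod_erase univ _ (mem_univ i), prod_const, erase_idem,
    card_erase_of_mem (mem_univ i), card_univ]
  congr 1
  refine prod_congr rfl fun l hl => ?_
  rw [prod_const, card_erase_of_mem hl, card_erase_of_mem (mem_univ i), card_univ, Nat.sub_sub]

noncomputable def symmetricMonomial (x : ι → ℝ) (b c : ℝ) (i : ι) : ℝ :=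
  x i ^ b * ∏ j ∈ univ.erase i, x j ^ c

variable {x : ι → ℝ}

theorem symmetricMonomial_rpow (hx : ∀ j, 0 ≤ x j) (b c r : ℝ) (i : ι) :
    symmetricMonomial x b c i ^ r = symmetricMonomial x (b * r) (c * r) i := by
  have hxc : ∀ j ∈ univ.erase i, 0 ≤ x j ^ c := fun j _ => Real.rpow_nonneg (hx j) c
  rw [symmetricMonomial, Real.mul_rpow (Real.rpow_nonneg (hx i) b) (prod_nonneg hxc),
    ← Real.finsetProd_rpow _ _ hxc, ← Real.rpow_mul (hx i)]
  exact congrArg _ (prod_congr rfl fun j _ => (Real.rpow_mul (hx j) c r).symm)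

theorem prod_erase_symmetricMonomial (hι : 2 ≤ Fintype.card ι) (hx : ∀ j, 0 ≤ x j)
    {b c : ℝ} (hb : 0 ≤ b) (hc : 0 ≤ c) (i : ι) :
    ∏ j ∈ univ.erase i, symmetricMonomial x b c j
      = symmetricMonomial x (c * (Fintype.card ι - 1)) (b + (Fintype.card ι - 2) * c) i := by
  have h1 : ((Fintype.card ι - 1 : ℕ) : ℝ) = Fintype.card ι - 1 := by
    rw [Nat.cast_sub (by omega), Nat.cast_one]
  have h2 : ((Fintype.card ι - 2 : ℕ) : ℝ) = Fintype.card ι - 2 := by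
    rw [Nat.cast_sub hι, Nat.cast_ofNat]
  have hcard : (0 : ℝ) ≤ Fintype.card ι - 2 := h2 ▸ Nat.cast_nonneg _
  simp only [symmetricMonomial]
  rw [prod_mul_distrib, prod_erase_prod_erase, mul_left_comm, ← prod_mul_distrib,
    ← Real.rpow_mul_natCast (hx i), h1]
  refine congrArg _ (prod_congr rfl fun j _ => ?_)
  rw [← Real.rpow_mul_natCast (hx j), h2, mul_comm c,
    ← Real.rpow_add_of_nonneg (hx j) hb (mul_nonneg hcard hc)]

end Monomial

section Exponents

variable {p : ℕ}

lemma almExp_zero (p : ℕ) : almExp p 0 = 0 := by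
  simp [almExp]

lemma almExpPrev_succ (p k : ℕ) : almExpPrev p (k + 1) = almExp p k := by
  simp [almExpPrev]

lemma almExp_nonneg (hp : 2 ≤ p) (k : ℕ) : 0 ≤ almExp p k := by
  have hp1 : (1 : ℝ) ≤ (p : ℝ) - 1 := by
    have : (2 : ℝ) ≤ p := by exact_mod_cast hp
    linarith
  have hq : (1 : ℝ) ≤ ((p : ℝ) - 1) ^ k := one_le_pow₀ hp1
  have hsign : -1 ≤ (-1 : ℝ) ^ (k + 1) / ((p : ℝ) - 1) ^ k := by
    rcases neg_one_pow_eq_or ℝ (k + 1) with h | h <;> rw [h]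
    · linarith [div_nonneg zero_le_one (zero_le_one.trans hq)]
    · rw [neg_div, neg_le_neg_iff, div_le_one (by linarith)]
      exact hq
  exact mul_nonneg (by positivity) (by linarith)

lemma almExpPrev_nonneg (hp : 2 ≤ p) (k : ℕ) : 0 ≤ almExpPrev p k := by
  cases k with
  | zero => exact zero_le_one
  | succ k => exact almExpPrev_succ p k ▸ almExp_nonneg hp k

lemma almExp_succ (hp : 2 ≤ p) (k : ℕ) :
    almExp p (k + 1) = (almExpPrev p k + ((p : ℝ) - 2) * almExp p k) * ((p : ℝ) - 1)⁻¹ := by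
  have hp2 : (2 : ℝ) ≤ p := by exact_mod_cast hp
  have hp1 : (p : ℝ) - 1 ≠ 0 := by linarith
  have hp0 : (p : ℝ) ≠ 0 := by linarith
  cases k with
  | zero =>
    simp only [almExpPrev, almExp, ↓reduceIte]
    field_simp
    ring
  | succ k =>
    simp only [almExpPrev, almExp, Nat.add_sub_cancel, Nat.succ_ne_zero, ↓reduceIte]
    field_simp
    ring

end Exponents

theorem alm_scalar_closed_form_general (p : ℕ) (hp : 2 ≤ p)
    (a : Fin p → AddCircle (2 * Real.pi) → ℝ)
    (hnonneg : ∀ i t, 0 ≤ a i t)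
    (A : ℕ → Fin p → AddCircle (2 * Real.pi) → ℝ)
    (hinit : ∀ i, A 0 i = a i)
    (hiter : ∀ k i t,
      A (k + 1) i t = (∏ j ∈ Finset.univ.erase i, A k j t) ^ (((p : ℝ) - 1)⁻¹)) :
    ∀ k i t, A k i t =
      a i t ^ almExpPrev p k * ∏ j ∈ Finset.univ.erase i, a j t ^ almExp p k := by
  intro k
  induction k with
  | zero => simp [hinit, almExpPrev, almExp_zero]
  | succ k ih =>
    intro i t
    have hx : ∀ j, 0 ≤ a j t := fun j => hnonneg j t
    have hp1 : (p : ℝ) - 1 ≠ 0 := by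
      have : (2 : ℝ) ≤ p := by exact_mod_cast hp
      linarith
    have ih' : ∀ j, A k j t = symmetricMonomial (a · t) (almExpPrev p k) (almExp p k) j :=
      fun j => ih j t
    change _ = symmetricMonomial (a · t) _ _ i
    rw [hiter, prod_congr rfl fun j _ => ih' j,
      prod_erase_symmetricMonomial (by simpa) hx (almExpPrev_nonneg hp k) (almExp_nonneg hp k),
      symmetricMonomial_rpow hx, Fintype.card_fin, mul_inv_cancel_right₀ hp1, ← almExp_succ hp,
      almExpPrev_succ]

/-- For continuous nonnegative symbols `a_1, …, a_p` on the circle, the ALM scalar iteration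
`a_i^{(k+1)} = (∏_{j ≠ i} a_j^{(k)})^{1/(p-1)}` satisfies
`a_i^{(k)} = a_i^{n_{k-1}} ∏_{j ≠ i} a_j^{n_k}` with `n_k = (1/p)(1 + (-1)^{k+1}/(p-1)^k)`. -/
theorem alm_scalar_closed_form (p : ℕ) (hp : 2 ≤ p)
    (a : Fin p → AddCircle (2 * Real.pi) → ℝ)
    (hcont : ∀ i, Continuous (a i)) (hnonneg : ∀ i t, 0 ≤ a i t)
    (A : ℕ → Fin p → AddCircle (2 * Real.pi) → ℝ)
    (hinit : ∀ i, A 0 i = a i)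
    (hiter : ∀ k i t,
      A (k + 1) i t = (∏ j ∈ Finset.univ.erase i, A k j t) ^ (((p : ℝ) - 1)⁻¹)) :
    ∀ k i t, A k i t =
      a i t ^ almExpPrev p k * ∏ j ∈ Finset.univ.erase i, a j t ^ almExp p k :=
  alm_scalar_closed_form_general p hp a hnonneg A hinit hiter
end

section
/- Let $p \ge 2$ be an integer. For $x \in [0,1]$, define $m_0(x) = x$ and $m_{k+1}(x) = \bigl(\frac{p-1+m_k(x)}{p}\bigr)^{-p} m_k(x)$. Then for all $k$ and all $x \in [0,1]$: $0 \le m_k(x) \le m_{k+1}(x) \le 1$, with strict inequalities when $x \notin \{0,1\}$. -/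
open Set

/-! Each step is `t ↦ t / b^p` with `b = (p-1+t)/p = 1 + (t-1)/p ∈ [0,1]`. Since `b^p ≤ 1` the
step does not decrease `t`, and Bernoulli's inequality `b^p ≥ 1 + p(b-1) = t` keeps the image at
most `1`, so `[0,1]` is invariant. For `t ∈ (0,1)` and `p ≥ 2` both inequalities are strict. -/

/-- The residual sequence in the coupled Newton iteration for the `p`-th root:
`m_0(x) = x`, `m_{k+1}(x) = ((p-1+m_k(x))/p)^{-p} m_k(x)`. -/
noncomputable def pthRootResidual (p : ℕ) : ℕ → ℝ → ℝ
  | 0 => fun x => x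
  | (k + 1) => fun x =>
      pthRootResidual p k x / (((p : ℝ) - 1 + pthRootResidual p k x) / p) ^ p

noncomputable def residualBase (p : ℕ) (t : ℝ) : ℝ := ((p : ℝ) - 1 + t) / p

noncomputable def residualStep (p : ℕ) (t : ℝ) : ℝ := t / residualBase p t ^ p

theorem pthRootResidual_succ (p k : ℕ) (x : ℝ) :
    pthRootResidual p (k + 1) x = residualStep p (pthRootResidual p k x) := rfl

section

variable {p : ℕ} {t : ℝ}

theorem residualBase_nonneg (hp : p ≠ 0) (ht : 0 ≤ t) : 0 ≤ residualBase p t := by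
  have : (1 : ℝ) ≤ p := by exact_mod_cast Nat.one_le_iff_ne_zero.mpr hp
  exact div_nonneg (by linarith) (Nat.cast_nonneg p)

theorem residualBase_le_one (ht : t ≤ 1) : residualBase p t ≤ 1 :=
  div_le_one_of_le₀ (by linarith) (Nat.cast_nonneg p)

theorem residualBase_lt_one (hp : p ≠ 0) (ht : t < 1) : residualBase p t < 1 :=
  (div_lt_one (by positivity)).mpr (by linarith)

theorem one_add_mul_residualBase_sub_one (hp : p ≠ 0) : 1 + p * (residualBase p t - 1) = t := by
  unfold residualBase
  field_simp
  ring

theorem le_residualBase_pow (hp : p ≠ 0) (ht : 0 ≤ t) : t ≤ residualBase p t ^ p := by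
  have hb : -1 ≤ residualBase p t := by linarith [residualBase_nonneg hp ht]
  simpa only [one_add_mul_residualBase_sub_one hp] using one_add_mul_sub_le_pow hb p

theorem lt_residualBase_pow (hp : 2 ≤ p) (ht0 : 0 ≤ t) (ht1 : t < 1) :
    t < residualBase p t ^ p := by
  have hp0 : p ≠ 0 := by omega
  have hb0 := residualBase_nonneg hp0 ht0
  have hb1 := residualBase_lt_one hp0 ht1
  have hp1 : (1 : ℝ) < p := by exact_mod_cast hp
  have := one_add_mul_self_lt_rpow_one_add (s := residualBase p t - 1) (by linarith)
    (by linarith) hp1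
  rwa [one_add_mul_residualBase_sub_one hp0, add_sub_cancel, Real.rpow_natCast] at this

theorem le_residualStep (hp : p ≠ 0) (ht0 : 0 ≤ t) (ht1 : t ≤ 1) : t ≤ residualStep p t := by
  rcases ht0.eq_or_lt with rfl | ht0
  · simp [residualStep]
  exact le_div_self ht0.le (ht0.trans_le (le_residualBase_pow hp ht0.le))
    (pow_le_one₀ (residualBase_nonneg hp ht0.le) (residualBase_le_one ht1))

theorem residualStep_le_one (hp : p ≠ 0) (ht : 0 ≤ t) : residualStep p t ≤ 1 :=
  div_le_one_of_le₀ (le_residualBase_pow hp ht) (pow_nonneg (residualBase_nonneg hp ht) p)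

theorem lt_residualStep (hp : 2 ≤ p) (ht0 : 0 < t) (ht1 : t < 1) : t < residualStep p t := by
  have hp0 : p ≠ 0 := by omega
  have hbp : 0 < residualBase p t ^ p := ht0.trans_le (le_residualBase_pow hp0 ht0.le)
  rw [residualStep, lt_div_iff₀ hbp]
  exact mul_lt_of_lt_one_right ht0
    (pow_lt_one₀ (residualBase_nonneg hp0 ht0.le) (residualBase_lt_one hp0 ht1) hp0)

theorem residualStep_lt_one (hp : 2 ≤ p) (ht0 : 0 ≤ t) (ht1 : t < 1) : residualStep p t < 1 := by
  have hbp := lt_residualBase_pow hp ht0 ht1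
  exact (div_lt_one (ht0.trans_lt hbp)).mpr hbp

end

theorem pthRootResidual_mem_Icc {p : ℕ} (hp : p ≠ 0) {x : ℝ} (hx : x ∈ Icc 0 1) :
    ∀ k, pthRootResidual p k x ∈ Icc 0 1
  | 0 => hx
  | k + 1 => by
    obtain ⟨h0, h1⟩ := pthRootResidual_mem_Icc hp hx k
    rw [pthRootResidual_succ]
    exact ⟨h0.trans (le_residualStep hp h0 h1), residualStep_le_one hp h0⟩

theorem pthRootResidual_mem_Ioo {p : ℕ} (hp : 2 ≤ p) {x : ℝ} (hx : x ∈ Ioo 0 1) :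
    ∀ k, pthRootResidual p k x ∈ Ioo 0 1
  | 0 => hx
  | k + 1 => by
    obtain ⟨h0, h1⟩ := pthRootResidual_mem_Ioo hp hx k
    rw [pthRootResidual_succ]
    exact ⟨h0.trans (lt_residualStep hp h0 h1), residualStep_lt_one hp h0.le h1⟩

/-- For `p ≥ 2` and `x ∈ [0,1]`: `0 ≤ m_k(x) ≤ m_{k+1}(x) ≤ 1` for all `k`, with strict
inequalities when `x ∉ {0, 1}`. -/
theorem pthRootResidual_monotone (p : ℕ) (hp : 2 ≤ p) :
    (∀ x ∈ Icc (0 : ℝ) 1, ∀ k : ℕ,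
        0 ≤ pthRootResidual p k x ∧
          pthRootResidual p k x ≤ pthRootResidual p (k + 1) x ∧
          pthRootResidual p (k + 1) x ≤ 1) ∧
      (∀ x ∈ Ioo (0 : ℝ) 1, ∀ k : ℕ,
        0 < pthRootResidual p k x ∧
          pthRootResidual p k x < pthRootResidual p (k + 1) x ∧
          pthRootResidual p (k + 1) x < 1) := by
  have hp0 : p ≠ 0 := by omega
  refine ⟨fun x hx k => ?_, fun x hx k => ?_⟩
  · obtain ⟨h0, h1⟩ := pthRootResidual_mem_Icc hp0 hx k
    rw [pthRootResidual_succ]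
    exact ⟨h0, le_residualStep hp0 h0 h1, residualStep_le_one hp0 h0⟩
  · obtain ⟨h0, h1⟩ := pthRootResidual_mem_Ioo hp hx k
    rw [pthRootResidual_succ]
    exact ⟨h0, lt_residualStep hp h0 h1, residualStep_lt_one hp h0.le h1⟩
end
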